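/- Let S be a finite set, r : S → [0,1] with r(ℓ) > 0 for all ℓ ∈ I, where I ⊆ S. Define r_I : S → ℝ by r_I(ℓ) = 1 if ℓ ∈ I and r_I(ℓ) = r(ℓ) otherwise. Then for every subset L of S with I ⊆ L, the normalized quantity (∏_{ℓ ∈ L} r(ℓ) · ∏_{ℓ ∈ S \ L} (1 - r(ℓ))) / (∑_{J : I ⊆ J ⊆ S} ∏_{ℓ ∈ J} r(ℓ) · ∏_{ℓ ∈ S \ J} (1 - r(ℓ))) equals ∏_{ℓ ∈ L} r_I(ℓ) · ∏_{ℓ ∈ S \ L} (1 - r_I(ℓ)). -/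

import Mathlib

open Finset

/-
Split a set `J` with `I ⊆ J ⊆ S` as `J = I ∪ K` with `K ⊆ S \ I`: the denominator factors as
`∏_{ℓ ∈ I} r ℓ · ∏_{ℓ ∈ S \ I} (r ℓ + (1 - r ℓ)) = ∏_{ℓ ∈ I} r ℓ`. Dividing the numerator by it
removes the factors `r ℓ`, `ℓ ∈ I`, which is exactly the effect of replacing `r` by `1` on `I ⊆ L`.
-/

namespace Finset

variable {α : Type*} [DecidableEq α]

theorem powerset_filter_superset_eq_Icc (I S : Finset α) :
    S.powerset.filter (I ⊆ ·) = Icc I S := by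
  ext J
  simp [and_comm]

theorem sum_Icc_prod_mul_prod_sdiff {R : Type*} [CommSemiring R] {I S : Finset α} (hIS : I ⊆ S)
    (f g : α → R) :
    ∑ J ∈ Icc I S, (∏ ℓ ∈ J, f ℓ) * ∏ ℓ ∈ S \ J, g ℓ =
      (∏ ℓ ∈ I, f ℓ) * ∏ ℓ ∈ S \ I, (f ℓ + g ℓ) := by
  have hinj : Set.InjOn (I ∪ ·) (S \ I).powerset := fun K hK K' hK' h => by
    simp only [coe_powerset, Set.mem_preimage, Set.mem_powerset_iff, coe_subset,
      subset_sdiff] at hK hK'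
    rw [← union_sdiff_cancel_left hK.2.symm, ← union_sdiff_cancel_left hK'.2.symm]
    exact congrArg (· \ I) h
  rw [Icc_eq_image_powerset hIS, sum_image hinj, prod_add, mul_sum]
  refine sum_congr rfl fun K hK => ?_
  rw [mem_powerset, subset_sdiff] at hK
  rw [prod_union hK.2.symm, sdiff_sdiff_left, sup_eq_union, mul_assoc]

theorem prod_ite_mem_one_eq_prod_sdiff {M : Type*} [CommMonoid M] (L I : Finset α) (f : α → M) :
    ∏ ℓ ∈ L, (if ℓ ∈ I then 1 else f ℓ) = ∏ ℓ ∈ L \ I, f ℓ := by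
  rw [prod_ite, prod_const_one, one_mul, filter_notMem_eq_sdiff]

end Finset

theorem stmt_2_general {α : Type*} [DecidableEq α] (S I L : Finset α) (r : α → ℝ)
    (hIS : I ⊆ S) (hIL : I ⊆ L)
    (hrI : ∀ ℓ ∈ I, 0 < r ℓ) :
    ((∏ ℓ ∈ L, r ℓ) * (∏ ℓ ∈ S \ L, (1 - r ℓ))) /
      (∑ J ∈ S.powerset.filter (fun J => I ⊆ J),
        (∏ ℓ ∈ J, r ℓ) * (∏ ℓ ∈ S \ J, (1 - r ℓ)))
    = (∏ ℓ ∈ L, (if ℓ ∈ I then (1 : ℝ) else r ℓ)) *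
      (∏ ℓ ∈ S \ L, (1 - (if ℓ ∈ I then (1 : ℝ) else r ℓ))) := by
  have hden : ∑ J ∈ S.powerset.filter (fun J => I ⊆ J),
      (∏ ℓ ∈ J, r ℓ) * (∏ ℓ ∈ S \ J, (1 - r ℓ)) = ∏ ℓ ∈ I, r ℓ := by
    rw [powerset_filter_superset_eq_Icc, sum_Icc_prod_mul_prod_sdiff hIS]
    simp
  have hcomplement : ∏ ℓ ∈ S \ L, (1 - (if ℓ ∈ I then (1 : ℝ) else r ℓ)) =
      ∏ ℓ ∈ S \ L, (1 - r ℓ) :=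
    prod_congr rfl fun ℓ hℓ => by rw [if_neg fun hℓI => (mem_sdiff.1 hℓ).2 (hIL hℓI)]
  have hI : ∏ ℓ ∈ I, r ℓ ≠ 0 := (prod_pos hrI).ne'
  rw [hden, hcomplement, prod_ite_mem_one_eq_prod_sdiff, ← prod_sdiff hIL]
  field_simp

theorem stmt_2 {α : Type*} [DecidableEq α] (S I L : Finset α) (r : α → ℝ)
    (hIS : I ⊆ S) (hLS : L ⊆ S) (hIL : I ⊆ L)
    (hr : ∀ ℓ ∈ S, r ℓ ∈ Set.Icc (0 : ℝ) 1) (hrI : ∀ ℓ ∈ I, 0 < r ℓ) :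
    ((∏ ℓ ∈ L, r ℓ) * (∏ ℓ ∈ S \ L, (1 - r ℓ))) /
      (∑ J ∈ S.powerset.filter (fun J => I ⊆ J),
        (∏ ℓ ∈ J, r ℓ) * (∏ ℓ ∈ S \ J, (1 - r ℓ)))
    = (∏ ℓ ∈ L, (if ℓ ∈ I then (1 : ℝ) else r ℓ)) *
      (∏ ℓ ∈ S \ L, (1 - (if ℓ ∈ I then (1 : ℝ) else r ℓ))) :=
  stmt_2_general S I L r hIS hIL hrI
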